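/- Under the hypotheses of the derivative error theorem at a general point x_0 (offsets h_i = x_i - x_0 with |x_i - x_j| ≥ h, |h_i| ≤ Kh, and |f^{(N+1)}| ≤ M on [x_0 - Kh, x_0 + Kh]), the estimated derivatives f^{(i)}(x_0)^e := i!·a_i^e satisfy |f^{(i)}(x_0)^e - f^{(i)}(x_0)| ≤ M·K^{2N+1-i}·h^{N+1-i}/(N-i)! for all 0 ≤ i ≤ N. -/

import Mathlib

/-!
With `a k = f⁽ᵏ⁾(x₀) / k!`, the samples are `f (x₀ + hs j) = (W a) j + r j`, where `r j` is the
Taylor remainder of order `N`; hence `ae - a = W⁻¹ r` is the coefficient vector of the Lagrange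
interpolant of `r`. Lagrange's form of the remainder gives `|r j| ≤ M (K h)^(N+1) / (N+1)!`. By
Vieta, the `i`-th coefficient of the basis polynomial `ℓ j` is at most `C(N, i) (K h)^(N-i) / h^N`
in absolute value: its roots are bounded by `K h` and its normalising constant is a product of `N`
node gaps, each at least `h`. Summing over the `N + 1` nodes and multiplying by `i!` gives the bound.
-/

open Finset Polynomial Matrix
open scoped Nat

theorem abs_sub_taylor_sum_le {f : ℝ → ℝ} {n : ℕ} (hf : ContDiff ℝ (n + 1) f) {x₀ R M : ℝ}
    (hb : ∀ ζ ∈ Set.Icc (x₀ - R) (x₀ + R), |iteratedDeriv (n + 1) f ζ| ≤ M) {y : ℝ}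
    (hy : |y| ≤ R) :
    |f (x₀ + y) - ∑ k ∈ range (n + 1), iteratedDeriv k f x₀ / k ! * y ^ k| ≤
      M * R ^ (n + 1) / (n + 1)! := by
  have hR : 0 ≤ R := (abs_nonneg y).trans hy
  have hM : 0 ≤ M := (abs_nonneg _).trans (hb x₀ ⟨by linarith, by linarith⟩)
  rcases eq_or_ne y 0 with rfl | hy0
  · simp only [sum_range_succ', ne_eq, Nat.add_one_ne_zero, not_false_eq_true, zero_pow,
      mul_zero, sum_const_zero, iteratedDeriv_zero, Nat.factorial_zero, Nat.cast_one, div_one,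
      pow_zero, mul_one, zero_add, add_zero, sub_self, abs_zero]
    positivity
  have hx : x₀ ≠ x₀ + y := by simpa using hy0
  obtain ⟨ξ, hξ, hrem⟩ := taylor_mean_remainder_lagrange_iteratedDeriv hx hf.contDiffOn
  have hsub : Set.uIcc x₀ (x₀ + y) ⊆ Set.Icc (x₀ - R) (x₀ + R) :=
    Set.uIcc_subset_Icc ⟨by linarith, by linarith⟩
      ⟨by linarith [neg_abs_le y], by linarith [le_abs_self y]⟩
  have htaylor : taylorWithinEval f n (Set.uIcc x₀ (x₀ + y)) x₀ (x₀ + y) =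
      ∑ k ∈ range (n + 1), iteratedDeriv k f x₀ / k ! * y ^ k := by
    rw [taylor_within_apply]
    refine sum_congr rfl fun k hk => ?_
    have hkn : (k : WithTop ℕ∞) ≤ n + 1 := by
      exact_mod_cast (Nat.lt_succ_iff.mp (mem_range.mp hk)).trans n.le_succ
    rw [iteratedDerivWithin_eq_iteratedDeriv (uniqueDiffOn_uIcc hx) (hf.contDiffAt.of_le hkn)
      Set.left_mem_uIcc, smul_eq_mul, add_sub_cancel_left]
    ring
  rw [← htaylor, hrem, add_sub_cancel_left, abs_div, abs_mul, abs_pow, Nat.abs_cast]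
  gcongr
  exact hb ξ (hsub (Set.uIoo_subset_uIcc_self hξ))

theorem Finset.abs_esymm_map_val_le {ι : Type*} (s : Finset ι) {v : ι → ℝ} {R : ℝ}
    (hv : ∀ i ∈ s, |v i| ≤ R) (m : ℕ) :
    |(s.val.map v).esymm m| ≤ (#s).choose m * R ^ m := by
  rw [Finset.esymm_map_val]
  calc |∑ t ∈ s.powersetCard m, ∏ i ∈ t, v i| ≤ ∑ t ∈ s.powersetCard m, R ^ m := by
        refine (abs_sum_le_sum_abs _ _).trans (sum_le_sum fun t ht => ?_)
        obtain ⟨hts, rfl⟩ := mem_powersetCard.mp ht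
        rw [abs_prod, ← prod_const]
        exact prod_le_prod (fun _ _ => abs_nonneg _) fun i hi => hv i (hts hi)
    _ = (#s).choose m * R ^ m := by rw [sum_const, card_powersetCard, nsmul_eq_mul]

theorem abs_coeff_prod_X_sub_C_le {ι : Type*} (s : Finset ι) {v : ι → ℝ} {R : ℝ}
    (hv : ∀ i ∈ s, |v i| ≤ R) {k : ℕ} (hk : k ≤ #s) :
    |(∏ i ∈ s, (X - C (v i))).coeff k| ≤ (#s).choose k * R ^ (#s - k) := by
  have hvieta := Multiset.prod_X_sub_C_coeff (s.val.map v) (k := k) (by simpa using hk)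
  rw [Multiset.map_map, Multiset.card_map] at hvieta
  rw [prod_eq_multiset_prod, show (fun i => X - C (v i)) = (fun t => X - C t) ∘ v from rfl,
    hvieta, Finset.card_val, abs_mul, abs_pow, abs_neg, abs_one,
    one_pow, one_mul, ← Nat.choose_symm hk]
  exact s.abs_esymm_map_val_le hv _

section Lagrange

variable {ι : Type*} [DecidableEq ι] {s : Finset ι} {v : ι → ℝ} {h R : ℝ} {m : ℕ}

theorem Lagrange.abs_coeff_basis_le (hcard : #s = m + 1) (hh : 0 < h)
    (hsep : ∀ i ∈ s, ∀ j ∈ s, i ≠ j → h ≤ |v i - v j|) (hv : ∀ i ∈ s, |v i| ≤ R)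
    {i : ι} (hi : i ∈ s) {k : ℕ} (hk : k ≤ m) :
    |(Lagrange.basis s v i).coeff k| ≤ m.choose k * R ^ (m - k) / h ^ m := by
  have hcard' : #(s.erase i) = m := by rw [card_erase_of_mem hi, hcard, Nat.add_sub_cancel]
  have hbasis : Lagrange.basis s v i =
      C (∏ j ∈ s.erase i, (v i - v j)⁻¹) * ∏ j ∈ s.erase i, (X - C (v j)) := by
    simp only [Lagrange.basis, Lagrange.basisDivisor, prod_mul_distrib, map_prod]
  have hnodes : h ^ m ≤ |∏ j ∈ s.erase i, (v i - v j)| := by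
    rw [abs_prod, ← hcard', ← prod_const]
    exact prod_le_prod (fun _ _ => hh.le) fun j hj =>
      hsep i hi j (mem_of_mem_erase hj) (ne_of_mem_erase hj).symm
  have hroots := abs_coeff_prod_X_sub_C_le (s.erase i) (fun j hj => hv j (mem_of_mem_erase hj))
    (hcard' ▸ hk)
  rw [hcard'] at hroots
  rw [hbasis, coeff_C_mul, prod_inv_distrib, abs_mul, abs_inv, div_eq_inv_mul]
  have hR : 0 ≤ R := (abs_nonneg _).trans (hv i hi)
  exact mul_le_mul (inv_anti₀ (by positivity) hnodes) hroots (abs_nonneg _) (by positivity)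

theorem Lagrange.abs_coeff_interpolate_le (hcard : #s = m + 1) (hh : 0 < h)
    (hsep : ∀ i ∈ s, ∀ j ∈ s, i ≠ j → h ≤ |v i - v j|) (hv : ∀ i ∈ s, |v i| ≤ R)
    {r : ι → ℝ} {ρ : ℝ} (hr : ∀ i ∈ s, |r i| ≤ ρ) {k : ℕ} (hk : k ≤ m) :
    |(Lagrange.interpolate s v r).coeff k| ≤ (m + 1) * ρ * (m.choose k * R ^ (m - k) / h ^ m) := by
  rw [Lagrange.interpolate_apply, finsetSum_coeff]
  calc |∑ i ∈ s, (C (r i) * Lagrange.basis s v i).coeff k|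
      ≤ ∑ i ∈ s, ρ * (m.choose k * R ^ (m - k) / h ^ m) := by
        refine (abs_sum_le_sum_abs _ _).trans (sum_le_sum fun i hi => ?_)
        rw [coeff_C_mul, abs_mul]
        exact mul_le_mul (hr i hi) (abs_coeff_basis_le hcard hh hsep hv hi hk) (abs_nonneg _)
          ((abs_nonneg _).trans (hr i hi))
    _ = (m + 1) * ρ * (m.choose k * R ^ (m - k) / h ^ m) := by
        rw [sum_const, hcard, nsmul_eq_mul, Nat.cast_succ, mul_assoc]

end Lagrange

theorem Matrix.vandermonde_mulVec_coeff {R : Type*} [CommRing R] {n : ℕ} (v : Fin n → R)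
    {p : R[X]} (hp : p.degree < n) :
    vandermonde v *ᵥ (fun k : Fin n => p.coeff k) = fun j => p.eval (v j) := by
  rcases eq_or_ne p 0 with rfl | hp0
  · ext; simp [mulVec, dotProduct]
  ext j
  rw [eval_eq_sum_range' ((natDegree_lt_iff_degree_lt hp0).mpr hp), ← Fin.sum_univ_eq_sum_range]
  simp only [mulVec, dotProduct, vandermonde_apply, mul_comm]

theorem Matrix.vandermonde_inv_mulVec_eq_coeff_interpolate {F : Type*} [Field F] {n : ℕ}
    {v : Fin n → F} (hv : Function.Injective v) (r : Fin n → F) :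
    (vandermonde v)⁻¹ *ᵥ r = fun k : Fin n => (Lagrange.interpolate univ v r).coeff k := by
  have hinj : Set.InjOn v (univ : Finset (Fin n)) := hv.injOn
  have hW : vandermonde v *ᵥ (fun k : Fin n => (Lagrange.interpolate univ v r).coeff k) = r := by
    rw [vandermonde_mulVec_coeff v (by simpa using Lagrange.degree_interpolate_lt (r := r) hinj)]
    exact funext fun j => Lagrange.eval_interpolate_at_node r hinj (mem_univ j)
  conv_lhs => rw [← hW]
  rw [mulVec_mulVec, nonsing_inv_mul _ (det_vandermonde_ne_zero_iff.mpr hv).isUnit,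
    one_mulVec]

theorem factorial_mul_interpolation_bound_eq {N i : ℕ} (hi : i ≤ N) {h : ℝ} (hh : h ≠ 0)
    (K M : ℝ) :
    (i ! : ℝ) * ((N + 1) * (M * (K * h) ^ (N + 1) / (N + 1)!) *
        (N.choose i * (K * h) ^ (N - i) / h ^ N)) =
      M * K ^ (2 * N + 1 - i) * h ^ (N + 1 - i) / (N - i)! := by
  obtain ⟨d, rfl⟩ := Nat.exists_eq_add_of_le hi
  have hchoose : ((i + d).choose i * i ! * d ! : ℝ) = (i + d)! := by
    have := Nat.choose_mul_factorial_mul_factorial hi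
    rw [Nat.add_sub_cancel_left] at this
    exact_mod_cast this
  have hchoose_ne : ((i + d).choose i : ℝ) ≠ 0 := Nat.cast_ne_zero.mpr (Nat.choose_pos hi).ne'
  rw [show 2 * (i + d) + 1 - i = (i + d + 1) + d by omega, show i + d + 1 - i = d + 1 by omega,
    Nat.add_sub_cancel_left, Nat.factorial_succ, Nat.cast_mul, ← hchoose]
  push_cast
  field_simp
  ring

theorem derivative_estimate_error_at_point_general (N : ℕ) (f : ℝ → ℝ) (x₀ h K M : ℝ)
    (hh : 0 < h)
    (hf : ContDiff ℝ (N + 1) f)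
    (hbound : ∀ ζ ∈ Set.Icc (x₀ - K * h) (x₀ + K * h), |iteratedDeriv (N + 1) f ζ| ≤ M)
    (hs : Fin (N + 1) → ℝ)  -- offsets h_i = x_i - x₀
    (hsep : ∀ i j, i ≠ j → h ≤ |hs i - hs j|)
    (hbd : ∀ i, |hs i| ≤ K * h)
    (ae : Fin (N + 1) → ℝ)
    (hae : ae = (Matrix.vandermonde hs)⁻¹.mulVec (fun j => f (x₀ + hs j))) :
    ∀ i : Fin (N + 1),
      |(i : ℕ).factorial * ae i - iteratedDeriv (i : ℕ) f x₀| ≤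
        M * K ^ (2 * N + 1 - (i : ℕ)) * h ^ (N + 1 - (i : ℕ)) /
          (N - (i : ℕ)).factorial := by
  intro i
  have hi : (i : ℕ) ≤ N := Nat.lt_succ_iff.mp i.isLt
  have hinj : Function.Injective hs := fun j k hjk => by
    by_contra hne
    linarith [hsep j k hne, show |hs j - hs k| = 0 by rw [hjk, sub_self, abs_zero]]
  set a : Fin (N + 1) → ℝ := fun k => iteratedDeriv k f x₀ / (k : ℕ)!
  set rem : Fin (N + 1) → ℝ := fun j => f (x₀ + hs j) - (vandermonde hs *ᵥ a) j
  have hsplit : ae = a + (vandermonde hs)⁻¹ *ᵥ rem := by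
    rw [hae, show (fun j => f (x₀ + hs j)) = vandermonde hs *ᵥ a + rem by ext; simp [rem],
      mulVec_add, mulVec_mulVec,
      nonsing_inv_mul _ (det_vandermonde_ne_zero_iff.mpr hinj).isUnit, one_mulVec]
  have hrem : ∀ j, |rem j| ≤ M * (K * h) ^ (N + 1) / (N + 1)! := fun j => by
    have hsum : (vandermonde hs *ᵥ a) j =
        ∑ k ∈ range (N + 1), iteratedDeriv k f x₀ / k ! * hs j ^ k := by
      simp only [mulVec, dotProduct, vandermonde_apply, a, mul_comm (hs j ^ _)]
      exact Fin.sum_univ_eq_sum_range (fun k => iteratedDeriv k f x₀ / k ! * hs j ^ k) (N + 1)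
    simpa only [rem, hsum] using abs_sub_taylor_sum_le hf hbound (hbd j)
  have hcoeff := Lagrange.abs_coeff_interpolate_le (Finset.card_fin (N + 1)) hh
    (fun j _ k _ => hsep j k) (fun j _ => hbd j) (fun j _ => hrem j) hi
  rw [hsplit, Pi.add_apply, vandermonde_inv_mulVec_eq_coeff_interpolate hinj, mul_add,
    mul_div_cancel₀ _ (by positivity : ((i : ℕ)! : ℝ) ≠ 0), add_sub_cancel_left, abs_mul,
    Nat.abs_cast, ← factorial_mul_interpolation_bound_eq hi hh.ne']
  exact mul_le_mul_of_nonneg_left hcoeff (by positivity)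

theorem derivative_estimate_error_at_point (N : ℕ) (f : ℝ → ℝ) (x₀ h K M : ℝ)
    (hh : 0 < h) (hK : 0 < K) (hM : 0 < M)
    (hf : ContDiff ℝ (N + 1) f)
    (hbound : ∀ ζ ∈ Set.Icc (x₀ - K * h) (x₀ + K * h), |iteratedDeriv (N + 1) f ζ| ≤ M)
    (hs : Fin (N + 1) → ℝ)  -- offsets h_i = x_i - x₀
    (hsep : ∀ i j, i ≠ j → h ≤ |hs i - hs j|)
    (hbd : ∀ i, |hs i| ≤ K * h)
    (ae : Fin (N + 1) → ℝ)
    (hae : ae = (Matrix.vandermonde hs)⁻¹.mulVec (fun j => f (x₀ + hs j))) :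
    ∀ i : Fin (N + 1),
      |(i : ℕ).factorial * ae i - iteratedDeriv (i : ℕ) f x₀| ≤
        M * K ^ (2 * N + 1 - (i : ℕ)) * h ^ (N + 1 - (i : ℕ)) /
          (N - (i : ℕ)).factorial :=
  derivative_estimate_error_at_point_general N f x₀ h K M hh hf hbound hs hsep hbd ae hae
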